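/- arXiv:0709.1627 — 2 statements merged into one kernel-verified Lean document; each statement's English description precedes it below -/
import Mathlib

section
/- Assume σ is a d-dimensional simplicial cone with primitive generators v_1, …, v_d ∈ ℤ^d, and let u_1, …, u_d ∈ ℤ^d be primitive vectors with ⟨u_i, v_j⟩ = l_i δ_{ij} for positive integers l_1, …, l_d, so that σ^∨ = ℝ_{≥0}u_1 + ⋯ + ℝ_{≥0}u_d. Let ω ∈ ℚ^d be the unique point with ⟨ω, v_j⟩ = 1 for all j. Let A ⊆ σ^∨ ∩ ℤ^d be finite and nonempty such that for each i = 1, …, d there exists a positive integer l with l·u_i ∈ A + (σ^∨ ∩ ℤ^d) (i.e. the corresponding monomial ideal has radical equal to the maximal monomial ideal m). If λ_A(ω)·P(A) ⊆ Q(m), then l_i = 1 for every i = 1, …, d (so that the associated toric ring is regular). -/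
open Finset Filter Pointwise

noncomputable section

namespace Paper

variable {d n : ℕ}

/-- The standard inner product pairing on `ℝ^d`. -/
def pair (u w : Fin d → ℝ) : ℝ := ∑ i, u i * w i

/-- The coercion `ℤ^d → ℝ^d`. -/
def toR (u : Fin d → ℤ) : Fin d → ℝ := fun i => (u i : ℝ)

/-- The cone generated by the integer vectors `v 1, …, v n`. -/
def cone (v : Fin n → Fin d → ℤ) : Set (Fin d → ℝ) :=
  {x | ∃ c : Fin n → ℝ, (∀ j, 0 ≤ c j) ∧ x = ∑ j, c j • toR (v j)}

/-- The dual cone `σ^∨ = {u | ⟨u, x⟩ ≥ 0 for all x ∈ σ}`. -/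
def dualCone (v : Fin n → Fin d → ℤ) : Set (Fin d → ℝ) :=
  {u | ∀ x ∈ cone v, 0 ≤ pair u x}

/-- Strong convexity of the cone generated by `v`. -/
def StronglyConvex (v : Fin n → Fin d → ℤ) : Prop :=
  ∀ x ∈ cone v, -x ∈ cone v → x = 0

/-- An integer vector is primitive if the gcd of its coordinates is 1. -/
def IsPrimitive (w : Fin d → ℤ) : Prop := Finset.univ.gcd w = 1

/-- The cone generated by `v` is `d`-dimensional. -/
def FullDim (v : Fin n → Fin d → ℤ) : Prop :=
  Submodule.span ℝ (Set.range fun j => toR (v j)) = ⊤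

/-- The Newton polyhedron `P(A) = conv(A) + σ^∨`. -/
def newton (v : Fin n → Fin d → ℤ) (A : Finset (Fin d → ℤ)) : Set (Fin d → ℝ) :=
  convexHull ℝ (toR '' ↑A) + dualCone v

/-- The set `Q(A) = ⋃_{a ∈ A} (a + σ^∨)`. -/
def QSet (v : Fin n → Fin d → ℤ) (A : Finset (Fin d → ℤ)) : Set (Fin d → ℝ) :=
  ⋃ a ∈ A, (toR a +ᵥ dualCone v)

/-- `λ_A(u) = sup {λ > 0 | u ∈ λ·P(A)}` (and `0` if no such `λ` exists;
note `Real.sSup` of the empty set is `0`). -/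
def lam (v : Fin n → Fin d → ℤ) (A : Finset (Fin d → ℤ)) (u : Fin d → ℝ) : ℝ :=
  sSup {l : ℝ | 0 < l ∧ u ∈ l • newton v A}

/-- `Q(m)` for the maximal monomial ideal, whose exponent set is
`(σ^∨ ∩ ℤ^d) \ {0}`. -/
def Qm (v : Fin n → Fin d → ℤ) : Set (Fin d → ℝ) :=
  ⋃ a ∈ {a : Fin d → ℤ | toR a ∈ dualCone v ∧ a ≠ 0}, (toR a +ᵥ dualCone v)

/-- The set `O = {u ∈ σ^∨ | ⟨u, v_j⟩ ≥ 1 for some j}`. -/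
def OSet (v : Fin n → Fin d → ℤ) : Set (Fin d → ℝ) :=
  {u ∈ dualCone v | ∃ j, 1 ≤ pair u (toR (v j))}


/-! If some `l i ≥ 2`, pick `a ∈ A` with `m • u i - a ∈ σ^∨`, so `a` pairs nonpositively with
every `v j`, `j ≠ i`. Starting from a point `μ • ω` of `λ_A(ω) • P(A)` with `μ` close to `1` and
moving a little towards `λ_A(ω) • a` gives a point of `λ_A(ω) • P(A) ⊆ Q(m)` whose pairing with
each `v j`, `j ≠ i`, is below `1` and with `v i` below `2`. But a point of `Q(m)` dominates a
nonzero lattice point of `σ^∨`; integrality forces that lattice point onto the ray through the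
primitive vector `u i`, so its pairing with `v i` is at least `l i ≥ 2`. -/

open Matrix

lemma pair_eq_dotProduct (x y : Fin d → ℝ) : pair x y = x ⬝ᵥ y := rfl

lemma toR_injective : Function.Injective (toR : (Fin d → ℤ) → Fin d → ℝ) :=
  fun _ _ h => funext fun i => Int.cast_injective (congrFun h i)

lemma toR_eq_zero {a : Fin d → ℤ} : toR a = 0 ↔ a = 0 := by
  rw [← toR_injective.eq_iff]
  simp [toR, funext_iff]

lemma toR_sub (a b : Fin d → ℤ) : toR (a - b) = toR a - toR b := by
  funext i; simp [toR]

lemma toR_zsmul (m : ℤ) (a : Fin d → ℤ) : toR (m • a) = (m : ℝ) • toR a := by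
  funext i; simp [toR]

lemma pair_toR_toR (a b : Fin d → ℤ) : pair (toR a) (toR b) = ((a ⬝ᵥ b : ℤ) : ℝ) := by
  simp [pair, toR, dotProduct]

lemma toR_mem_cone (v : Fin n → Fin d → ℤ) (j : Fin n) : toR (v j) ∈ cone v :=
  ⟨Pi.single j 1, fun k => by by_cases h : k = j <;> simp [h], by simp [Pi.single_apply]⟩

lemma mem_dualCone_iff {v : Fin n → Fin d → ℤ} {x : Fin d → ℝ} :
    x ∈ dualCone v ↔ ∀ j, 0 ≤ pair x (toR (v j)) := by
  refine ⟨fun hx j => hx _ (toR_mem_cone v j), ?_⟩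
  rintro h y ⟨c, hc, rfl⟩
  simp only [pair_eq_dotProduct, dotProduct_sum, dotProduct_smul, smul_eq_mul]
  exact Finset.sum_nonneg fun j _ => mul_nonneg (hc j) (h j)

lemma convex_dualCone (v : Fin n → Fin d → ℤ) : Convex ℝ (dualCone v) := by
  intro x hx y hy a b ha hb _ z hz
  simp only [pair_eq_dotProduct, add_dotProduct, smul_dotProduct, smul_eq_mul] at hx hy ⊢
  exact add_nonneg (mul_nonneg ha (hx z hz)) (mul_nonneg hb (hy z hz))

lemma exists_of_mem_Qm {v : Fin n → Fin d → ℤ} {x : Fin d → ℝ} (hx : x ∈ Qm v) :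
    ∃ b : Fin d → ℤ, b ≠ 0 ∧ toR b ∈ dualCone v ∧ x - toR b ∈ dualCone v := by
  simp only [Qm, Set.mem_iUnion₂, Set.mem_ofPred_eq] at hx
  obtain ⟨b, ⟨hb, hb0⟩, y, hy, rfl⟩ := hx
  exact ⟨b, hb0, hb, by simpa using hy⟩

lemma FullDim.eq_zero_of_pair_eq_zero {v : Fin n → Fin d → ℤ} (hv : FullDim v)
    {x : Fin d → ℝ} (hx : ∀ j, pair x (toR (v j)) = 0) : x = 0 := by
  have hx0 : dotProductBilin ℝ ℝ x = 0 := LinearMap.ext_on_range hv hx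
  exact dotProduct_self_eq_zero.mp (LinearMap.congr_fun hx0 x)

/-- The dual of a full-dimensional cone is pointed, so `0` is not of the form `b + y`. -/
lemma zero_notMem_Qm {v : Fin n → Fin d → ℤ} (hv : FullDim v) : (0 : Fin d → ℝ) ∉ Qm v := by
  intro h0
  obtain ⟨b, hb0, hb, hnb⟩ := exists_of_mem_Qm h0
  refine hb0 (toR_eq_zero.mp (hv.eq_zero_of_pair_eq_zero fun j => ?_))
  have h₁ := mem_dualCone_iff.mp hb j
  have h₂ := mem_dualCone_iff.mp hnb j
  simp only [zero_sub, pair_eq_dotProduct, neg_dotProduct] at h₁ h₂ ⊢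
  linarith

/-- Bézout: with `∑ g k * w k = 1`, the scalar is the integer `∑ g k * b k`. -/
lemma IsPrimitive.exists_eq_zsmul {w b : Fin d → ℤ} (hw : IsPrimitive w) {c : ℝ}
    (h : toR b = c • toR w) : ∃ m : ℤ, b = m • w := by
  obtain ⟨g, hg⟩ := Finset.univ.gcd_eq_sum_mul w
  have hc : ((∑ k, b k * g k : ℤ) : ℝ) = c := by
    have hb : ∀ k, (b k : ℝ) = c * w k := fun k => congrFun h k
    have hg' : ((∑ k, w k * g k : ℤ) : ℝ) = 1 := by rw [← hg, hw]; simp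
    push_cast at hg' ⊢
    simp only [hb, mul_assoc, ← Finset.mul_sum, hg', mul_one]
  refine ⟨∑ k, b k * g k, toR_injective ?_⟩
  rw [toR_zsmul, hc, h]

section Simplicial

variable {v u : Fin n → Fin d → ℤ} {l : Fin n → ℤ}

lemma eq_smul_of_pair_eq_zero (hv : FullDim v)
    (hpairing : ∀ i j, pair (toR (u i)) (toR (v j)) = if i = j then (l i : ℝ) else 0)
    {i : Fin n} (hl : l i ≠ 0) {x : Fin d → ℝ} (hx : ∀ j, j ≠ i → pair x (toR (v j)) = 0) :
    x = (pair x (toR (v i)) / l i) • toR (u i) := by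
  refine sub_eq_zero.mp (hv.eq_zero_of_pair_eq_zero fun j => ?_)
  have hpair := hpairing i j
  simp only [pair_eq_dotProduct, sub_dotProduct, smul_dotProduct, smul_eq_mul] at hpair hx ⊢
  rcases eq_or_ne i j with rfl | hij
  · rw [hpair, if_pos rfl]
    field_simp
    ring
  · rw [hpair, if_neg hij, hx j (Ne.symm hij)]
    ring

/-- The nonzero lattice point `b` of `σ^∨` below `x` lies on the ray through `u i`, so it is a
positive integer multiple of `u i`. -/
lemma le_pair_of_mem_Qm (hv : FullDim v)
    (hpairing : ∀ i j, pair (toR (u i)) (toR (v j)) = if i = j then (l i : ℝ) else 0)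
    {i : Fin n} (hu : IsPrimitive (u i)) (hl : 0 < l i) {x : Fin d → ℝ} (hx : x ∈ Qm v)
    (hxj : ∀ j, j ≠ i → pair x (toR (v j)) < 1) : (l i : ℝ) ≤ pair x (toR (v i)) := by
  obtain ⟨b, hb0, hb, hxb⟩ := exists_of_mem_Qm hx
  have hbx : ∀ j, pair (toR b) (toR (v j)) ≤ pair x (toR (v j)) := fun j => by
    have := mem_dualCone_iff.mp hxb j
    rw [pair_eq_dotProduct, sub_dotProduct] at this
    exact sub_nonneg.mp this
  have hbj : ∀ j, j ≠ i → pair (toR b) (toR (v j)) = 0 := fun j hj => by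
    have h₀ := mem_dualCone_iff.mp hb j
    have h₁ := (hbx j).trans_lt (hxj j hj)
    rw [pair_toR_toR] at h₀ h₁ ⊢
    norm_cast at h₀ h₁ ⊢
    omega
  obtain ⟨m, rfl⟩ := hu.exists_eq_zsmul (eq_smul_of_pair_eq_zero hv hpairing hl.ne' hbj)
  have hbi : pair (toR (m • u i)) (toR (v i)) = m * l i := by
    rw [toR_zsmul, pair_eq_dotProduct, smul_dotProduct, ← pair_eq_dotProduct, hpairing,
      if_pos rfl, smul_eq_mul]
  have hm : 0 < m := by
    have h₀ := mem_dualCone_iff.mp hb i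
    rw [hbi, mul_nonneg_iff_of_pos_right (by exact_mod_cast hl)] at h₀
    exact (Int.cast_nonneg_iff.mp h₀).lt_of_ne (by rintro rfl; simp at hb0)
  calc (l i : ℝ) ≤ m * l i := le_mul_of_one_le_left (by exact_mod_cast hl.le) (by exact_mod_cast hm)
    _ = pair (toR (m • u i)) (toR (v i)) := hbi.symm
    _ ≤ pair x (toR (v i)) := hbx i

end Simplicial

section Newton

variable {v : Fin n → Fin d → ℤ} {A : Finset (Fin d → ℤ)} {x : Fin d → ℝ}

variable (v A) in
def lamSet (x : Fin d → ℝ) : Set ℝ := {t | 0 < t ∧ x ∈ t • newton v A}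

lemma lam_eq_sSup_lamSet : lam v A x = sSup (lamSet v A x) := rfl

lemma toR_mem_newton {a : Fin d → ℤ} (ha : a ∈ A) : toR a ∈ newton v A := by
  have h0 : (0 : Fin d → ℝ) ∈ dualCone v := mem_dualCone_iff.mpr fun j => by simp [pair]
  simpa [newton] using Set.add_mem_add (subset_convexHull ℝ _ (Set.mem_image_of_mem toR ha)) h0

lemma convex_newton : Convex ℝ (newton v A) :=
  (convex_convexHull ℝ _).add (convex_dualCone v)

/-- Otherwise `λ_A(x) = 0` by the `sSup` convention, and `0 • P(A) = {0}` is not in `Q(m)`. -/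
lemma lamSet_nonempty_and_bddAbove (hv : FullDim v) (hA : (newton v A).Nonempty)
    (h : lam v A x • newton v A ⊆ Qm v) :
    (lamSet v A x).Nonempty ∧ BddAbove (lamSet v A x) := by
  by_contra hS
  have hlam : lam v A x = 0 := by
    rcases not_and_or.mp hS with hS | hS
    · rw [lam_eq_sSup_lamSet, Set.not_nonempty_iff_eq_empty.mp hS, Real.sSup_empty]
    · exact Real.sSup_of_not_bddAbove hS
  refine zero_notMem_Qm hv (h ?_)
  rw [hlam, Set.zero_smul_set hA]
  exact Set.zero_mem_zero

lemma exists_smul_mem_lam_smul_newton (hS : (lamSet v A x).Nonempty ∧ BddAbove (lamSet v A x))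
    {c : ℝ} (hc : 1 < c) : ∃ μ < c, μ • x ∈ lam v A x • newton v A := by
  obtain ⟨t₀, ht₀⟩ := hS.1
  have hlam : 0 < lam v A x := ht₀.1.trans_le (le_csSup hS.2 ht₀)
  obtain ⟨t, ⟨ht, y, hy, rfl⟩, hlt⟩ := exists_lt_of_lt_csSup hS.1 (div_lt_self hlam hc)
  refine ⟨lam v A (t • y) / t, ?_, ?_⟩
  · rw [div_lt_iff₀ ht]
    rwa [div_lt_iff₀ (by linarith), mul_comm] at hlt
  · rw [smul_smul, div_mul_cancel₀ _ ht.ne']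
    exact Set.smul_mem_smul_set hy

/-- Move slightly from a point `μ • ω` of `λ_A(ω) • P(A)` towards `λ_A(ω) • a`; the weight `s`
is small enough that the `v i`-coordinate of `a` contributes less than `1`. -/
lemma exists_mem_lam_smul_newton_pair_lt {ω : Fin d → ℝ}
    (hS : (lamSet v A ω).Nonempty ∧ BddAbove (lamSet v A ω))
    (hω : ∀ j, pair ω (toR (v j)) = 1) {a : Fin d → ℤ} (ha : a ∈ A) {i : Fin n}
    (hai : ∀ j, j ≠ i → pair (toR a) (toR (v j)) ≤ 0) :
    ∃ x ∈ lam v A ω • newton v A,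
      (∀ j, j ≠ i → pair x (toR (v j)) < 1) ∧ pair x (toR (v i)) < 2 := by
  set L := lam v A ω
  set K := pair (toR a) (toR (v i))
  set s : ℝ := (L * |K| + 2)⁻¹
  have hL : 0 ≤ L := Real.sSup_nonneg fun t ht => ht.1.le
  have hLK : 0 ≤ L * |K| := mul_nonneg hL (abs_nonneg K)
  have hs : 0 < s := by positivity
  have hs₁ : s < 1 := inv_lt_one_of_one_lt₀ (by linarith)
  have hsK : s * (L * K) < 1 := by
    calc s * (L * K) ≤ s * (L * |K|) := by gcongr; exact le_abs_self K
      _ < s * (L * |K| + 2) := by gcongr; norm_num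
      _ = 1 := inv_mul_cancel₀ (by positivity)
  obtain ⟨μ, hμ, hμω⟩ := exists_smul_mem_lam_smul_newton hS
    ((one_lt_div (by linarith)).mpr (by linarith) : 1 < 1 / (1 - s))
  have hμ₁ : (1 - s) * μ < 1 := by
    rwa [lt_div_iff₀ (by linarith), mul_comm] at hμ
  refine ⟨(1 - s) • (μ • ω) + s • (L • toR a), (convex_newton.smul L) hμω
    (Set.smul_mem_smul_set (toR_mem_newton ha)) (by linarith) hs.le (by ring), ?_⟩
  have hpair : ∀ j, pair ((1 - s) • (μ • ω) + s • (L • toR a)) (toR (v j))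
      = (1 - s) * μ + s * (L * pair (toR a) (toR (v j))) := fun j => by
    simp only [pair_eq_dotProduct, add_dotProduct, smul_dotProduct, smul_eq_mul] at hω ⊢
    rw [hω j, mul_one]
  refine ⟨fun j hj => ?_, ?_⟩
  · rw [hpair]
    nlinarith [mul_nonpos_of_nonneg_of_nonpos (mul_nonneg hs.le hL) (hai j hj)]
  · rw [hpair]
    linarith

end Newton

theorem simplicial_regularity_criterion_general
    (d : ℕ)
    (v : Fin d → Fin d → ℤ)
    (hli : LinearIndependent ℝ fun j => toR (v j))
    (u : Fin d → Fin d → ℤ) (huprim : ∀ i, IsPrimitive (u i))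
    (l : Fin d → ℤ) (hl : ∀ i, 0 < l i)
    (hpairing : ∀ i j, pair (toR (u i)) (toR (v j)) = if i = j then (l i : ℝ) else 0)
    (ω : Fin d → ℚ)
    (hω : ∀ j, pair (fun i => (ω i : ℝ)) (toR (v j)) = 1)
    (A : Finset (Fin d → ℤ))
    (hArad : ∀ i, ∃ m : ℕ, 0 < m ∧ ∃ a ∈ A, toR ((m : ℤ) • u i - a) ∈ dualCone v)
    (hthr : lam v A (fun i => (ω i : ℝ)) • newton v A ⊆ Qm v) :
    ∀ i, l i = 1 := by
  intro i
  by_contra hne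
  have : Nonempty (Fin d) := ⟨i⟩
  have hv : FullDim v := hli.span_eq_top_of_card_eq_finrank (by simp)
  obtain ⟨m, -, a, ha, hma⟩ := hArad i
  have hai : ∀ j, j ≠ i → pair (toR a) (toR (v j)) ≤ 0 := fun j hj => by
    have := mem_dualCone_iff.mp hma j
    rwa [toR_sub, toR_zsmul, pair_eq_dotProduct, sub_dotProduct, smul_dotProduct,
      ← pair_eq_dotProduct, hpairing, if_neg (Ne.symm hj), smul_zero, zero_sub,
      Left.nonneg_neg_iff] at this
  have hS := lamSet_nonempty_and_bddAbove hv ⟨_, toR_mem_newton ha⟩ hthr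
  obtain ⟨x, hx, hxj, hxi⟩ := exists_mem_lam_smul_newton_pair_lt hS hω ha hai
  have hlx := le_pair_of_mem_Qm hv hpairing (huprim i) (hl i) (hthr hx) hxj
  have hl₂ : (2 : ℝ) ≤ l i := by exact_mod_cast (show 2 ≤ l i by have := hl i; omega)
  linarith

/-- regularity criterion for simplicial toric rings.  If
`λ_A(ω)·P(A) ⊆ Q(m)` (i.e. `c(a) = c^m(a)` for the monomial ideal `a` with
exponent set `A`, `√a = m`), then every `l_i = 1`. -/
theorem simplicial_regularity_criterion
    (d : ℕ) (hd : 1 ≤ d)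
    (v : Fin d → Fin d → ℤ)
    (hprim : ∀ j, IsPrimitive (v j))
    (hli : LinearIndependent ℝ fun j => toR (v j))
    (u : Fin d → Fin d → ℤ) (huprim : ∀ i, IsPrimitive (u i))
    (l : Fin d → ℤ) (hl : ∀ i, 0 < l i)
    (hpairing : ∀ i j, pair (toR (u i)) (toR (v j)) = if i = j then (l i : ℝ) else 0)
    (hdual : dualCone v = cone u)
    (ω : Fin d → ℚ)
    (hω : ∀ j, pair (fun i => (ω i : ℝ)) (toR (v j)) = 1)
    (A : Finset (Fin d → ℤ)) (hAne : A.Nonempty)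
    (hAl : ∀ a ∈ A, toR a ∈ dualCone v)
    (hArad : ∀ i, ∃ m : ℕ, 0 < m ∧ ∃ a ∈ A, toR ((m : ℤ) • u i - a) ∈ dualCone v)
    (hthr : lam v A (fun i => (ω i : ℝ)) • newton v A ⊆ Qm v) :
    ∀ i, l i = 1 :=
  simplicial_regularity_criterion_general d v hli u huprim l hl hpairing ω hω A hArad hthr

end Paper
end
end

section
/- Assume σ is a d-dimensional simplicial cone, i.e. n = d and v_1, …, v_d are linearly independent. Let A, B ⊆ σ^∨ ∩ ℤ^d be finite nonempty sets such that σ^∨ \ Q(B) is bounded (equivalently, the monomial ideal with exponent set B is primary to the maximal monomial ideal). Then sup_{u ∈ σ^∨ \ Q(B)} λ_A(u) is a rational number. -/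
open Finset Filter Pointwise

noncomputable section

namespace Paper

variable {d n : ℕ}

/-!
In the coordinates `y_j = ⟨u, v_j⟩` the cone `σ^∨` is the positive orthant, `σ^∨ \ Q(B)` is a
bounded staircase, and `λ_A(u)` is the value of the linear program
`max {∑ μ_a | μ ≥ 0, ∑ μ_a ⟨a, v_·⟩ ≤ y}`, which is monotone and positively homogeneous in `y`.
Boundedness puts every point of the staircase below one of finitely many corners, whose
coordinates are values `⟨b, v_j⟩`, `b ∈ B`, and which are limits of points `t • corner` of the
staircase. So the supremum is the value of the linear program at a corner. That program has
integer data and a bounded feasible region, so its optimum is attained at a vertex, which solves a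
nonsingular rational linear system and is therefore rational. (If `0 ∈ A` the program is unbounded
and `λ_A = 0` by the convention `sSup = 0` for unbounded sets.)
-/

open Matrix Topology Set Filter

theorem sSup_setOf_pos_and_mem_eq_of_isGreatest {s : Set ℝ} {a : ℝ} (h : IsGreatest s a)
    (ha : 0 ≤ a) : sSup {l | 0 < l ∧ l ∈ s} = a := by
  rcases ha.eq_or_lt with rfl | hpos
  · have hempty : {l | 0 < l ∧ l ∈ s} = ∅ :=
      eq_empty_of_forall_notMem fun l hl => (h.2 hl.2).not_gt hl.1
    rw [hempty, Real.sSup_empty]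
  · exact IsGreatest.csSup_eq ⟨⟨hpos, h.1⟩, fun l hl => h.2 hl.2⟩

section RationalPolyhedron

variable {ι κ : Type*} [Fintype ι] [Fintype κ]

theorem eq_zero_of_mem_extremePoints_of_active {M : Matrix ι κ ℝ} {c : ι → ℝ} {x h : κ → ℝ}
    (hx : x ∈ {y | M *ᵥ y ≤ c}.extremePoints ℝ)
    (hh : ∀ i, (M *ᵥ x) i = c i → (M *ᵥ h) i = 0) : h = 0 := by
  have hnear : ∀ᶠ t in 𝓝 (0 : ℝ), M *ᵥ (x + t • h) ≤ c := by
    simp only [Pi.le_def, mulVec_add, mulVec_smul, Pi.add_apply, Pi.smul_apply, smul_eq_mul]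
    refine eventually_all.2 fun i => ?_
    rcases (hx.1 i).eq_or_lt with hi | hi
    · exact .of_forall fun t => by simp [hi, hh i hi]
    · have hcont : Continuous fun t : ℝ => (M *ᵥ x) i + t * (M *ᵥ h) i := by fun_prop
      exact (hcont.tendsto 0).eventually (ge_mem_nhds (by simpa using hi))
  have hsymm : ∀ᶠ t in 𝓝[>] (0 : ℝ), 0 < t ∧ M *ᵥ (x + t • h) ≤ c ∧ M *ᵥ (x + (-t) • h) ≤ c :=
    eventually_mem_nhdsWithin.and <| nhdsWithin_le_nhds <| hnear.and <|
      (continuous_neg.tendsto' (0 : ℝ) 0 neg_zero).eventually hnear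
  obtain ⟨t, ht, hplus, hminus⟩ := hsymm.exists
  have hseg : x ∈ openSegment ℝ (x + t • h) (x + (-t) • h) :=
    ⟨1 / 2, 1 / 2, by norm_num, by norm_num, by norm_num, by module⟩
  have heq : x + t • h = x := hx.2 hplus hminus hseg
  simpa [ht.ne'] using heq

theorem exists_comp_eq_of_mulVec_eq {K L : Type*} [Field K] [Field L]
    [DecidableEq ι] [DecidableEq κ] (f : K →+* L) (M : Matrix ι κ K) (r : ι → K) {x : κ → L}
    (hx : M.map f *ᵥ x = f ∘ r) (hker : ∀ y, M.map f *ᵥ y = 0 → y = 0) :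
    ∃ y : κ → K, x = f ∘ y := by
  have hinj : LinearMap.ker M.mulVecLin = ⊥ := by
    refine LinearMap.ker_eq_bot'.2 fun y hy => funext fun k => f.injective ?_
    have hy' : M.map f *ᵥ (f ∘ y) = 0 := by
      funext i
      rw [← RingHom.map_mulVec, show M *ᵥ y = 0 from hy]
      simp
    simpa using congrFun (hker _ hy') k
  -- a left inverse of `M` over `K` recovers `x` from the `K`-rational right-hand side
  obtain ⟨g, hg⟩ := M.mulVecLin.exists_leftInverse_of_injective hinj
  set N : Matrix κ ι K := LinearMap.toMatrix' g
  have hNM : N * M = 1 := by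
    rw [← LinearMap.toMatrix'_toLin' M, ← LinearMap.toMatrix'_comp, Matrix.toLin'_apply', hg,
      LinearMap.toMatrix'_id]
  refine ⟨N *ᵥ r, ?_⟩
  calc x = (N.map f * M.map f) *ᵥ x := by
        rw [← Matrix.map_mul, hNM, Matrix.map_one _ f.map_zero f.map_one, one_mulVec]
    _ = f ∘ (N *ᵥ r) := by
        rw [← mulVec_mulVec, hx]
        funext i
        exact (RingHom.map_mulVec f N r i).symm

theorem _root_.IsCompact.exists_mem_extremePoints_forall_le {E : Type*} [AddCommGroup E]
    [Module ℝ E] [TopologicalSpace E] [T2Space E] [IsTopologicalAddGroup E] [ContinuousSMul ℝ E]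
    [LocallyConvexSpace ℝ E] {P : Set E} (hP : IsCompact P) (hne : P.Nonempty)
    (l : StrongDual ℝ E) : ∃ x ∈ P.extremePoints ℝ, ∀ y ∈ P, l y ≤ l x := by
  have hexp : IsExposed ℝ P (l.toExposed P) := ContinuousLinearMap.toExposed.isExposed
  obtain ⟨x, hx⟩ := (hexp.isCompact hP).extremePoints_nonempty
    (hP.exists_isMaxOn hne l.continuous.continuousOn)
  exact ⟨x, hexp.isExtreme.extremePoints_subset_extremePoints hx, (extremePoints_subset hx).2⟩

def ratPolyhedron (M : Matrix ι κ ℚ) (c : ι → ℚ) : Set (κ → ℝ) :=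
  {y | M.map (↑) *ᵥ y ≤ (↑) ∘ c}

theorem exists_rat_eq_of_mem_extremePoints [DecidableEq κ] {M : Matrix ι κ ℚ} {c : ι → ℚ}
    {x : κ → ℝ} (hx : x ∈ (ratPolyhedron M c).extremePoints ℝ) : ∃ y : κ → ℚ, x = (↑) ∘ y := by
  classical
  let active := {i // (M.map (↑) *ᵥ x) i = c i}
  exact exists_comp_eq_of_mulVec_eq (Rat.castHom ℝ) (Matrix.of fun i : active => M i)
    (fun i => c i) (funext fun i => i.2)
    (fun y hy => eq_zero_of_mem_extremePoints_of_active hx fun i hi => congrFun hy ⟨i, hi⟩)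

theorem exists_rat_mem_forall_le [DecidableEq κ] {M : Matrix ι κ ℚ} {c : ι → ℚ}
    (hb : Bornology.IsBounded (ratPolyhedron M c)) (hne : (ratPolyhedron M c).Nonempty)
    (l : StrongDual ℝ (κ → ℝ)) :
    ∃ y : κ → ℚ, (↑) ∘ y ∈ ratPolyhedron M c ∧ ∀ z ∈ ratPolyhedron M c, l z ≤ l ((↑) ∘ y) := by
  have hclosed : IsClosed (ratPolyhedron M c) := isClosed_le (by fun_prop) continuous_const
  obtain ⟨x, hx, hmax⟩ :=
    (Metric.isCompact_of_isClosed_isBounded hclosed hb).exists_mem_extremePoints_forall_le hne l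
  obtain ⟨y, rfl⟩ := exists_rat_eq_of_mem_extremePoints hx
  exact ⟨y, extremePoints_subset hx, hmax⟩

end RationalPolyhedron

section MaxScale

variable {m ι : Type*} [Fintype ι]

def lpFeasible (M : Matrix m ι ℝ) (g : m → ℝ) : Set (ι → ℝ) := {μ | 0 ≤ μ ∧ M *ᵥ μ ≤ g}

def scaleSet (M : Matrix m ι ℝ) (g : m → ℝ) : Set ℝ :=
  {l | 0 < l ∧ ∃ μ ∈ lpFeasible M g, ∑ i, μ i = l}

/-- The function `lam` read in dual coordinates (`lam_eq_maxScale`), the columns of `M` being the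
exponents. -/
def maxScale (M : Matrix m ι ℝ) (g : m → ℝ) : ℝ := sSup (scaleSet M g)

variable {M : Matrix m ι ℝ} {g g' : m → ℝ}

theorem sum_le_sum_of_mem_lpFeasible [Fintype m] (hcol : ∀ i, 1 ≤ ∑ j, M j i) {μ : ι → ℝ}
    (hμ : μ ∈ lpFeasible M g) : ∑ i, μ i ≤ ∑ j, g j :=
  calc ∑ i, μ i ≤ ∑ i, μ i * ∑ j, M j i :=
        Finset.sum_le_sum fun i _ => le_mul_of_one_le_right (hμ.1 i) (hcol i)
    _ = ∑ j, (M *ᵥ μ) j := by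
        simp only [mulVec, dotProduct, Finset.mul_sum]
        rw [Finset.sum_comm]
        simp only [mul_comm]
    _ ≤ ∑ j, g j := Finset.sum_le_sum fun j _ => hμ.2 j

theorem isBounded_lpFeasible [Fintype m] (hcol : ∀ i, 1 ≤ ∑ j, M j i) :
    Bornology.IsBounded (lpFeasible M g) := by
  refine (Metric.isBounded_iff_subset_closedBall 0).2 ⟨∑ j, g j, fun μ hμ => ?_⟩
  have hsum := sum_le_sum_of_mem_lpFeasible hcol hμ
  refine mem_closedBall_zero_iff.2 <| (pi_norm_le_iff_of_nonneg ?_).2 fun i => ?_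
  · exact (Finset.sum_nonneg fun i _ => hμ.1 i).trans hsum
  · rw [Real.norm_of_nonneg (hμ.1 i)]
    exact (Finset.single_le_sum (fun i _ => hμ.1 i) (Finset.mem_univ i)).trans hsum

theorem bddAbove_scaleSet [Fintype m] (hcol : ∀ i, 1 ≤ ∑ j, M j i) : BddAbove (scaleSet M g) :=
  ⟨∑ j, g j, by
    rintro _ ⟨-, μ, hμ, rfl⟩
    exact sum_le_sum_of_mem_lpFeasible hcol hμ⟩

theorem maxScale_mono [Fintype m] (hcol : ∀ i, 1 ≤ ∑ j, M j i) (hg : g ≤ g') :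
    maxScale M g ≤ maxScale M g' := by
  have hsub : scaleSet M g ⊆ scaleSet M g' := by
    rintro l ⟨hl, μ, hμ, rfl⟩
    exact ⟨hl, μ, ⟨hμ.1, hμ.2.trans hg⟩, rfl⟩
  rcases (scaleSet M g).eq_empty_or_nonempty with hempty | hne
  · rw [maxScale, hempty, Real.sSup_empty]
    exact Real.sSup_nonneg fun l hl => hl.1.le
  · exact csSup_le_csSup (bddAbove_scaleSet hcol) hne hsub

theorem smul_mem_scaleSet {t l : ℝ} (ht : 0 < t) (hl : l ∈ scaleSet M g) :
    t * l ∈ scaleSet M (t • g) := by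
  obtain ⟨hl, μ, ⟨hμ0, hμ⟩, rfl⟩ := hl
  refine ⟨mul_pos ht hl, t • μ, ⟨smul_nonneg ht.le hμ0, ?_⟩, by simp [Finset.mul_sum]⟩
  rw [mulVec_smul]
  exact smul_le_smul_of_nonneg_left hμ ht.le

theorem maxScale_smul {t : ℝ} (ht : 0 < t) (g : m → ℝ) :
    maxScale M (t • g) = t * maxScale M g := by
  have hset : scaleSet M (t • g) = t • scaleSet M g := by
    refine Subset.antisymm (fun l hl => ?_) ?_
    · refine (mem_smul_set_iff_inv_smul_mem₀ ht.ne' _ _).2 ?_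
      simpa [inv_smul_smul₀ ht.ne'] using smul_mem_scaleSet (inv_pos.2 ht) hl
    · rintro _ ⟨l, hl, rfl⟩
      exact smul_mem_scaleSet ht hl
  rw [maxScale, maxScale, hset, Real.sSup_smul_of_nonneg ht.le, smul_eq_mul]

theorem maxScale_eq_zero_of_col_eq_zero {i : ι} (hi : ∀ j, M j i = 0) (hg : 0 ≤ g) :
    maxScale M g = 0 := by
  classical
  -- a zero column makes every scale feasible, and `sSup` of an unbounded set is `0`
  refine Real.sSup_of_not_bddAbove fun ⟨b, hb⟩ => ?_
  have hmem : |b| + 1 ∈ scaleSet M g := by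
    refine ⟨by positivity, Pi.single i (|b| + 1), ⟨?_, ?_⟩, by simp⟩
    · exact Pi.single_nonneg.2 (by positivity)
    · have hcol0 : M *ᵥ Pi.single i (|b| + 1) = 0 := funext fun j => by simp [hi]
      rwa [hcol0]
  linarith [hb hmem, le_abs_self b]

theorem sSup_image_maxScale_eq_zero_of_col_eq_zero {S : Set (m → ℝ)} (hS : ∀ g ∈ S, 0 ≤ g)
    {i : ι} (hi : ∀ j, M j i = 0) : sSup (maxScale M '' S) = 0 := by
  have hzero : ∀ g ∈ S, maxScale M g = 0 := fun g hg => maxScale_eq_zero_of_col_eq_zero hi (hS g hg)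
  exact le_antisymm (Real.sSup_nonpos (forall_mem_image.2 fun g hg => (hzero g hg).le))
    (Real.sSup_nonneg (forall_mem_image.2 fun g hg => (hzero g hg).ge))

theorem exists_rat_maxScale_eq [Fintype m] [DecidableEq ι] (M : Matrix m ι ℚ)
    (hcol : ∀ i, 1 ≤ ∑ j, (M j i : ℝ)) {g : m → ℚ} (hg : 0 ≤ g) :
    ∃ q : ℚ, maxScale (M.map (↑)) ((↑) ∘ g) = q := by
  have hP : lpFeasible (M.map (↑)) ((↑) ∘ g) =
      ratPolyhedron (fromRows (-1 : Matrix ι ι ℚ) M) (Sum.elim 0 g) := by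
    ext μ
    simp [lpFeasible, ratPolyhedron, fromRows_map, fromRows_mulVec, Sum.elim_le_elim_iff,
      Sum.comp_elim, Matrix.map_neg, neg_mulVec, and_comm]
  have hzero : (0 : ι → ℝ) ∈ lpFeasible (M.map (↑)) ((↑) ∘ g) :=
    ⟨le_rfl, by simpa [Pi.le_def] using hg⟩
  obtain ⟨y, hy, hmax⟩ := exists_rat_mem_forall_le (hP ▸ isBounded_lpFeasible hcol) ⟨0, hP ▸ hzero⟩
    (∑ i, ContinuousLinearMap.proj i)
  rw [← hP] at hy hmax
  have hgreatest : IsGreatest ((fun μ : ι → ℝ => ∑ i, μ i) '' lpFeasible (M.map (↑)) ((↑) ∘ g))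
      (∑ i, (y i : ℝ)) :=
    ⟨⟨_, hy, rfl⟩, forall_mem_image.2 fun z hz => by simpa using hmax z hz⟩
  refine ⟨∑ i, y i, ?_⟩
  rw [Rat.cast_sum]
  exact sSup_setOf_pos_and_mem_eq_of_isGreatest hgreatest (Finset.sum_nonneg fun i _ => hy.1 i)

end MaxScale

theorem exists_sSup_image_eq_of_corners {E : Type*} [AddCommGroup E] [Module ℝ E] {F : E → ℝ}
    {S : Set E} {G : Finset E} (hS : S.Nonempty) (habove : ∀ u ∈ S, ∃ g ∈ G, F u ≤ F g)
    (hscale : ∀ g ∈ G, ∀ t ∈ Ioo (0 : ℝ) 1, t • g ∈ S)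
    (hhom : ∀ g ∈ G, ∀ t ∈ Ioo (0 : ℝ) 1, F (t • g) = t * F g) :
    ∃ g ∈ G, sSup (F '' S) = F g := by
  have hG : G.Nonempty := let ⟨u, hu⟩ := hS; let ⟨g, hg, _⟩ := habove u hu; ⟨g, hg⟩
  obtain ⟨g, hg, hmax⟩ := G.exists_max_image F hG
  have hub : ∀ y ∈ F '' S, y ≤ F g := forall_mem_image.2 fun u hu =>
    let ⟨g', hg', hle⟩ := habove u hu; hle.trans (hmax g' hg')
  refine ⟨g, hg, le_antisymm (csSup_le (hS.image F) hub) ?_⟩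
  have hcont : Continuous fun t : ℝ => t * F g := by fun_prop
  have hlim : Tendsto (fun t : ℝ => t * F g) (𝓝[<] 1) (𝓝 (F g)) := by
    simpa using (hcont.tendsto 1).mono_left nhdsWithin_le_nhds
  refine le_of_tendsto hlim ?_
  filter_upwards [Ioo_mem_nhdsLT (show (0 : ℝ) < 1 by norm_num)] with t ht
  rw [← hhom g hg t ht]
  exact le_csSup ⟨F g, hub⟩ (mem_image_of_mem F (hscale g hg t ht))

section Staircase

variable {m : Type*} [Fintype m]

/-- `σ^∨ \ Q(B)` in dual coordinates (`image_dualCoord_diff_QSet`). -/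
def staircase (B : Finset (m → ℝ)) : Set (m → ℝ) := {g | 0 ≤ g ∧ ∀ b ∈ B, ¬b ≤ g}

variable {B : Finset (m → ℝ)}

theorem exists_lt_apply_of_mem_staircase (hS : Bornology.IsBounded (staircase B)) {u : m → ℝ}
    (hu : u ∈ staircase B) (j : m) : ∃ b ∈ B, u j < b j := by
  classical
  by_contra! hle
  obtain ⟨C, hC⟩ := hS.exists_norm_le
  have hray : u + (|C| + 1) • Pi.single j 1 ∈ staircase B := by
    refine ⟨add_nonneg hu.1 (smul_nonneg (by positivity) (Pi.single_nonneg.2 zero_le_one)),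
      fun b hb hbu => hu.2 b hb fun i => ?_⟩
    by_cases hij : i = j
    · subst hij; exact hle b hb
    · simpa [hij] using hbu i
  have hnorm := (norm_le_pi_norm _ j).trans (hC _ hray)
  simp only [Pi.add_apply, Pi.smul_apply, Pi.single_eq_same, smul_eq_mul, mul_one,
    Real.norm_eq_abs] at hnorm
  have hu0 : 0 ≤ u j := hu.1 j
  linarith [le_abs_self (u j + (|C| + 1)), le_abs_self C]

theorem exists_corners (hS : Bornology.IsBounded (staircase B)) :
    ∃ G : Finset (m → ℝ), (∀ g ∈ G, ∀ j, ∃ b ∈ B, g j = b j) ∧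
      (∀ u ∈ staircase B, ∃ g ∈ G, u ≤ g) ∧ ∀ g ∈ G, ∀ t ∈ Ioo (0 : ℝ) 1, t • g ∈ staircase B := by
  classical
  refine ⟨(Fintype.piFinset fun j => B.image (· j)).filter
    fun g => ∀ t ∈ Ioo (0 : ℝ) 1, t • g ∈ staircase B, fun g hg j => ?_, fun u hu => ?_,
    fun g hg => (Finset.mem_filter.1 hg).2⟩
  · obtain ⟨b, hb, hbj⟩ :=
      Finset.mem_image.1 (Fintype.mem_piFinset.1 (Finset.mem_filter.1 hg).1 j)
    exact ⟨b, hb, hbj.symm⟩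
  -- the corner above `u`: in each coordinate, the least value of the generators exceeding `u`
  have hmin : ∀ j, ∃ b ∈ B.filter (fun b => u j < b j),
      ∀ b' ∈ B.filter (fun b => u j < b j), b j ≤ b' j := fun j =>
    let ⟨b, hb, hlt⟩ := exists_lt_apply_of_mem_staircase hS hu j
    Finset.exists_min_image _ _ ⟨b, Finset.mem_filter.2 ⟨hb, hlt⟩⟩
  choose β hβ hβmin using hmin
  have hlt : ∀ j, u j < β j j := fun j => (Finset.mem_filter.1 (hβ j)).2
  refine ⟨fun j => β j j, Finset.mem_filter.2 ⟨Fintype.mem_piFinset.2 fun j =>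
    Finset.mem_image_of_mem _ (Finset.mem_filter.1 (hβ j)).1, fun t ht => ⟨?_, ?_⟩⟩,
    fun j => (hlt j).le⟩
  · exact smul_nonneg ht.1.le fun j => (hu.1 j).trans (hlt j).le
  · intro b hb hbc
    obtain ⟨i, hi⟩ : ∃ i, u i < b i := by simpa [Pi.le_def] using hu.2 b hb
    have hcb := hβmin i b (Finset.mem_filter.2 ⟨hb, hi⟩)
    have hbt : b i ≤ t * β i i := hbc i
    have hu0 : 0 ≤ u i := hu.1 i
    have hpos : 0 < β i i := hu0.trans_lt (hlt i)
    linarith [mul_lt_mul_of_pos_right ht.2 hpos]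

end Staircase

theorem exists_rat_sSup_image_maxScale_staircase {m ι : Type*} [Fintype m] [Fintype ι]
    [DecidableEq ι] (M : Matrix m ι ℚ) (hcol : ∀ i, 1 ≤ ∑ j, (M j i : ℝ))
    {B : Finset (m → ℝ)} (hBq : ∀ b ∈ B, ∀ j, ∃ q : ℚ, b j = q)
    (hS : Bornology.IsBounded (staircase B)) :
    ∃ q : ℚ, sSup (maxScale (M.map (↑)) '' staircase B) = q := by
  rcases (staircase B).eq_empty_or_nonempty with hempty | hne
  · exact ⟨0, by simp [hempty]⟩
  obtain ⟨G, hGB, hGabove, hGscale⟩ := exists_corners hS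
  obtain ⟨g, hg, hsup⟩ := exists_sSup_image_eq_of_corners (F := maxScale (M.map (↑))) hne
    (fun u hu => let ⟨g, hg, hug⟩ := hGabove u hu; ⟨g, hg, maxScale_mono hcol hug⟩) hGscale
    (fun g _ t ht => maxScale_smul ht.1 g)
  choose q hq using fun j => let ⟨b, hb, hbj⟩ := hGB g hg j; hbj ▸ hBq b hb j
  have hg0 : 0 ≤ g := fun j => by
    simpa using (hGscale g hg (1 / 2) ⟨by norm_num, by norm_num⟩).1 j
  have hq0 : 0 ≤ q := fun j => by exact_mod_cast (hq j ▸ hg0 j : (0 : ℝ) ≤ q j)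
  rw [hsup, show g = (↑) ∘ q from funext hq]
  exact exists_rat_maxScale_eq M hcol hq0

theorem convexHull_range_eq_image_stdSimplex {ι E : Type*} [Fintype ι] [DecidableEq ι]
    [AddCommGroup E] [Module ℝ E] (f : ι → E) :
    convexHull ℝ (range f) = (fun c => ∑ i, c i • f i) '' stdSimplex ℝ ι := by
  have hL : (fun c => ∑ i, c i • f i) = ⇑(Fintype.linearCombination ℝ f) :=
    funext fun c => (Fintype.linearCombination_apply ℝ f c).symm
  rw [← convexHull_rangle_single_eq_stdSimplex, hL, LinearMap.image_convexHull, ← range_comp]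
  congr
  funext i
  simp

section DualCoord

variable (v : Fin n → Fin d → ℤ)

/-- The coordinates `⟨u, v_j⟩`, in which `σ^∨` is the positive orthant (`mem_dualCone_iff`). -/
def dualCoord : (Fin d → ℝ) →ₗ[ℝ] (Fin n → ℝ) := ((Matrix.of v).map (↑)).mulVecLin

theorem dualCoord_apply (u : Fin d → ℝ) (j : Fin n) : dualCoord v u j = pair u (toR (v j)) := by
  simp [dualCoord, mulVec, dotProduct, pair, toR, mul_comm]

theorem dualCoord_toR (a : Fin d → ℤ) : dualCoord v (toR a) = toR (Matrix.of v *ᵥ a) :=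
  funext fun j => (RingHom.map_mulVec (Int.castRingHom ℝ) (Matrix.of v) a j).symm

theorem dualCoord_bijective {v : Fin d → Fin d → ℤ}
    (hli : LinearIndependent ℝ fun j => toR (v j)) : Function.Bijective (dualCoord v) := by
  have hunit : IsUnit ((Matrix.of v).map ((↑) : ℤ → ℝ)) :=
    Matrix.linearIndependent_rows_iff_isUnit.1 hli
  exact ⟨mulVec_injective_iff_isUnit.2 hunit, mulVec_surjective_iff_isUnit.2 hunit⟩

theorem mem_dualCone_iff_s16 {u : Fin d → ℝ} : u ∈ dualCone v ↔ 0 ≤ dualCoord v u := by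
  classical
  refine ⟨fun h j => ?_, fun h x ⟨c, hc, hx⟩ => ?_⟩
  · rw [dualCoord_apply]
    exact h _ ⟨Pi.single j 1, fun i => by by_cases hij : i = j <;> simp [hij], by simp⟩
  · have hpair : pair u x = ∑ j, c j * dualCoord v u j := by
      simp only [hx, dualCoord_apply]
      exact (dotProduct_sum u _ _).trans (Finset.sum_congr rfl fun j _ => dotProduct_smul _ _ _)
    rw [hpair]
    exact Finset.sum_nonneg fun j _ => mul_nonneg (hc j) (h j)

theorem mem_QSet_iff {B : Finset (Fin d → ℤ)} {u : Fin d → ℝ} :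
    u ∈ QSet v B ↔ ∃ b ∈ B, dualCoord v (toR b) ≤ dualCoord v u := by
  simp only [QSet, mem_iUnion, exists_prop, mem_vadd_set_iff_neg_vadd_mem, vadd_eq_add,
    mem_dualCone_iff_s16, neg_add_eq_sub, map_sub, sub_nonneg]

theorem image_dualCoord_diff_QSet (hT : Function.Surjective (dualCoord v))
    (B : Finset (Fin d → ℤ)) :
    dualCoord v '' (dualCone v \ QSet v B) = staircase (B.image fun b => dualCoord v (toR b)) := by
  ext g
  simp only [mem_image, Set.mem_sdiff, mem_dualCone_iff_s16, mem_QSet_iff, staircase, mem_ofPred_eq,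
    Finset.forall_mem_image, not_exists, not_and]
  constructor
  · rintro ⟨u, ⟨hu, hq⟩, rfl⟩
    exact ⟨hu, hq⟩
  · rintro ⟨hg, hB⟩
    obtain ⟨u, rfl⟩ := hT g
    exact ⟨u, ⟨hg, hB⟩, rfl⟩

/-- The columns are the exponents `a ∈ A` in dual coordinates. -/
def expMatrix (A : Finset (Fin d → ℤ)) : Matrix (Fin n) A ℚ :=
  Matrix.of fun j a => ((Matrix.of v *ᵥ (a : Fin d → ℤ)) j : ℚ)

variable {A : Finset (Fin d → ℤ)}

theorem expMatrix_mulVec (c : A → ℝ) :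
    (expMatrix v A).map (↑) *ᵥ c = dualCoord v (∑ a, c a • toR (a : Fin d → ℤ)) := by
  funext j
  simp [expMatrix, mulVec, dotProduct, dualCoord_toR, toR, Finset.sum_apply, mul_comm]

theorem mem_newton_iff {x : Fin d → ℝ} :
    x ∈ newton v A ↔ ∃ c ∈ stdSimplex ℝ A, (expMatrix v A).map (↑) *ᵥ c ≤ dualCoord v x := by
  classical
  have hrange : toR '' ↑A = range fun a : A => toR (a : Fin d → ℤ) := by
    ext; simp
  simp only [newton, hrange, convexHull_range_eq_image_stdSimplex, Set.mem_add, mem_image,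
    expMatrix_mulVec]
  constructor
  · rintro ⟨_, ⟨c, hc, rfl⟩, z, hz, rfl⟩
    exact ⟨c, hc, by simpa using (mem_dualCone_iff_s16 v).1 hz⟩
  · rintro ⟨c, hc, hle⟩
    exact ⟨_, ⟨c, hc, rfl⟩, _, (mem_dualCone_iff_s16 v).2 (by simpa using hle), add_sub_cancel _ x⟩

theorem mem_smul_newton_iff {l : ℝ} (hl : 0 < l) {u : Fin d → ℝ} :
    u ∈ l • newton v A ↔
      ∃ μ ∈ lpFeasible ((expMatrix v A).map (↑)) (dualCoord v u), ∑ a, μ a = l := by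
  rw [mem_smul_set_iff_inv_smul_mem₀ hl.ne', mem_newton_iff, map_smul]
  constructor
  · rintro ⟨c, hc, hle⟩
    refine ⟨l • c, ⟨smul_nonneg hl.le hc.1, ?_⟩, ?_⟩
    · rw [mulVec_smul]
      exact (le_inv_smul_iff_of_pos hl).1 hle
    · simp only [Pi.smul_apply, smul_eq_mul, ← Finset.mul_sum, hc.2, mul_one]
  · rintro ⟨μ, ⟨hμ0, hμ⟩, rfl⟩
    refine ⟨(∑ a, μ a)⁻¹ • μ, ⟨fun a => smul_nonneg (inv_nonneg.2 hl.le) (hμ0 a), ?_⟩, ?_⟩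
    · simp only [Pi.smul_apply, smul_eq_mul, ← Finset.mul_sum, inv_mul_cancel₀ hl.ne']
    · rw [mulVec_smul]
      exact smul_le_smul_of_nonneg_left hμ (inv_nonneg.2 hl.le)

theorem lam_eq_maxScale (u : Fin d → ℝ) :
    lam v A u = maxScale ((expMatrix v A).map (↑)) (dualCoord v u) :=
  congrArg sSup <| Set.ext fun _ => and_congr_right fun hl => mem_smul_newton_iff v hl

theorem one_le_sum_expMatrix (hinj : Function.Injective (dualCoord v))
    (hAl : ∀ a ∈ A, toR a ∈ dualCone v) (hA0 : (0 : Fin d → ℤ) ∉ A) (a : A) :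
    1 ≤ ∑ j, (expMatrix v A j a : ℝ) := by
  set w := Matrix.of v *ᵥ (a : Fin d → ℤ)
  have hw0 : 0 ≤ w := fun j => by
    have hj : (0 : ℝ) ≤ w j := by
      simpa [dualCoord_toR, toR] using (mem_dualCone_iff_s16 v).1 (hAl a a.2) j
    exact_mod_cast hj
  obtain ⟨j, hj⟩ : ∃ j, w j ≠ 0 := by
    by_contra! hw
    have hT : dualCoord v (toR a) = dualCoord v 0 := by
      rw [dualCoord_toR, map_zero, show Matrix.of v *ᵥ (a : Fin d → ℤ) = 0 from funext hw]
      funext; simp [toR]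
    have ha : (a : Fin d → ℤ) = 0 := funext fun i => by simpa [toR] using congrFun (hinj hT) i
    exact hA0 (ha ▸ a.2)
  have hsum : 0 < ∑ j, w j :=
    Finset.sum_pos' (fun j _ => hw0 j) ⟨j, Finset.mem_univ j, (hw0 j).lt_of_ne' hj⟩
  have hcast : ∑ j, (expMatrix v A j a : ℝ) = ((∑ j, w j : ℤ) : ℝ) := by simp [expMatrix, w]
  rw [hcast]
  exact_mod_cast hsum

end DualCoord

theorem sup_lam_rational_general
    (d : ℕ)
    (v : Fin d → Fin d → ℤ)
    (hli : LinearIndependent ℝ fun j => toR (v j))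
    (A B : Finset (Fin d → ℤ))
    (hAl : ∀ a ∈ A, toR a ∈ dualCone v)
    (hbdd : Bornology.IsBounded (dualCone v \ QSet v B)) :
    ∃ q : ℚ, sSup (lam v A '' (dualCone v \ QSet v B)) = (q : ℝ) := by
  classical
  have hT := dualCoord_bijective hli
  have himage := image_dualCoord_diff_QSet v hT.2 B
  rw [funext (lam_eq_maxScale v), ← image_image, himage]
  by_cases hA0 : (0 : Fin d → ℤ) ∈ A
  · refine ⟨0, ?_⟩
    rw [Rat.cast_zero]
    exact sSup_image_maxScale_eq_zero_of_col_eq_zero (fun g hg => hg.1) (i := ⟨0, hA0⟩)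
      fun j => by simp [expMatrix]
  refine exists_rat_sSup_image_maxScale_staircase _ (one_le_sum_expMatrix v hT.1 hAl hA0)
    (Finset.forall_mem_image.2 fun b _ j => ⟨(Matrix.of v *ᵥ b) j, by simp [dualCoord_toR, toR]⟩)
    (himage ▸ (dualCoord v).toContinuousLinearMap.lipschitz.isBounded_image hbdd)

/-- for a simplicial cone and `B` with `σ^∨ \ Q(B)` bounded
(`J` is `m`-primary), the F-threshold `sup_{u ∈ σ^∨ \ Q(B)} λ_A(u)` is
rational. -/
theorem sup_lam_rational
    (d : ℕ) (hd : 1 ≤ d)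
    (v : Fin d → Fin d → ℤ)
    (hsc : StronglyConvex v) (hprim : ∀ j, IsPrimitive (v j))
    (hli : LinearIndependent ℝ fun j => toR (v j))
    (A B : Finset (Fin d → ℤ)) (hAne : A.Nonempty) (hBne : B.Nonempty)
    (hAl : ∀ a ∈ A, toR a ∈ dualCone v) (hBl : ∀ b ∈ B, toR b ∈ dualCone v)
    (hbdd : Bornology.IsBounded (dualCone v \ QSet v B)) :
    ∃ q : ℚ, sSup (lam v A '' (dualCone v \ QSet v B)) = (q : ℝ) :=
  sup_lam_rational_general d v hli A B hAl hbdd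

end Paper
end
end
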